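/- Let T be a tree and let S be a (2,2,…,2)-staircase point set (all boxes of size 2), and let φ be an L-shaped embedding of T in S. Then any two distinct vertices of T of degree 4 are mapped by φ into distinct boxes of S. -/
import Mathlib


/-- A point set: finitely many points in the plane, no two of which share
an x-coordinate or a y-coordinate. -/
def IsPointSet (S : Finset (ℝ × ℝ)) : Prop :=
  ∀ p ∈ S, ∀ q ∈ S, p ≠ q → p.1 ≠ q.1 ∧ p.2 ≠ q.2

/-- The drawing of the edge `uv`: the union of the two axis-parallel segments
joining `φ u` and `φ v` through the corner point `c u v`. -/
def LDraw {α : Type*} (φ : α → ℝ × ℝ) (c : α → α → ℝ × ℝ) (u v : α) : Set (ℝ × ℝ) :=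
  segment ℝ (φ u) (c u v) ∪ segment ℝ (c u v) (φ v)

/-- `φ` together with the corner assignment `c` is an L-shaped embedding of the
graph `G` in the point set `S`:  `φ` is an injective map of the vertices into `S`,
every edge `uv` is drawn as an `L` whose corner is `((φ u).1, (φ v).2)` or
`((φ v).1, (φ u).2)`, and the drawings of two distinct edges intersect only in the
image `φ w` of a common endpoint `w` of the two edges. -/
def IsLEmbedding {α : Type*} (G : SimpleGraph α) (S : Finset (ℝ × ℝ))
    (φ : α → ℝ × ℝ) (c : α → α → ℝ × ℝ) : Prop :=
  Function.Injective φ ∧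
  (∀ v, φ v ∈ S) ∧
  (∀ u v, c u v = c v u) ∧
  (∀ u v, G.Adj u v → c u v = ((φ u).1, (φ v).2) ∨ c u v = ((φ v).1, (φ u).2)) ∧
  (∀ u v a b, G.Adj u v → G.Adj a b → s(u, v) ≠ s(a, b) →
    ∀ p ∈ LDraw φ c u v ∩ LDraw φ c a b,
      ∃ w, (w = u ∨ w = v) ∧ (w = a ∨ w = b) ∧ p = φ w)

/-- `G` admits an L-shaped embedding in the point set `S`. -/
def HasLEmbedding {α : Type*} (G : SimpleGraph α) (S : Finset (ℝ × ℝ)) : Prop :=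
  ∃ φ c, IsLEmbedding G S φ c

/-- `box` is an `(a 0, …, a (k-1))`-staircase: the `i`-th box consists of `a i` points
with increasing x- and y-coordinates, and every point of a later box lies strictly
below and strictly to the right of every point of an earlier box. -/
def IsStaircase {k : ℕ} (a : Fin k → ℕ) (box : Fin k → Finset (ℝ × ℝ)) : Prop :=
  (∀ i, (box i).card = a i) ∧
  (∀ i, ∀ p ∈ box i, ∀ q ∈ box i, p ≠ q → p.1 ≠ q.1 ∧ (p.1 < q.1 ↔ p.2 < q.2)) ∧
  (∀ i j : Fin k, i < j → ∀ p ∈ box i, ∀ q ∈ box j, p.1 < q.1 ∧ q.2 < p.2)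

/-- The point set of a staircase: the union of its boxes. -/
noncomputable def staircaseSet {k : ℕ} (box : Fin k → Finset (ℝ × ℝ)) : Finset (ℝ × ℝ) :=
  Finset.univ.biUnion box

section Aux

lemma mem_seg_vert {a b b1 b2 : ℝ} (h : b ∈ Set.uIcc b1 b2) :
    ((a, b) : ℝ × ℝ) ∈ segment ℝ (a, b1) (a, b2) := by
  rw [← segment_eq_uIcc] at h
  obtain ⟨s, t, hs, ht, hst, heq⟩ := h
  refine ⟨s, t, hs, ht, hst, ?_⟩
  have ha : s * a + t * a = a := by rw [← add_mul, hst, one_mul]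
  simp only [Prod.smul_mk, smul_eq_mul, Prod.mk_add_mk, Prod.mk.injEq]
  exact ⟨ha, heq⟩

lemma mem_seg_horiz {b a a1 a2 : ℝ} (h : a ∈ Set.uIcc a1 a2) :
    ((a, b) : ℝ × ℝ) ∈ segment ℝ (a1, b) (a2, b) := by
  rw [← segment_eq_uIcc] at h
  obtain ⟨s, t, hs, ht, hst, heq⟩ := h
  refine ⟨s, t, hs, ht, hst, ?_⟩
  have hb : s * b + t * b = b := by rw [← add_mul, hst, one_mul]
  simp only [Prod.smul_mk, smul_eq_mul, Prod.mk_add_mk, Prod.mk.injEq]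
  exact ⟨heq, hb⟩

lemma ray_between {yu y1 y2 : ℝ} (h1 : y1 ≠ yu) (h2 : y2 ≠ yu) (h : yu < y1 ↔ yu < y2) :
    y1 ∈ Set.uIcc yu y2 ∨ y2 ∈ Set.uIcc yu y1 := by
  simp only [Set.mem_uIcc]
  rcases h1.lt_or_gt with hl | hl
  · have hl2 : y2 < yu := by
      rcases h2.lt_or_gt with h' | h'; · exact h'
      · exact absurd (h.2 h') (not_lt.2 hl.le)
    rcases le_total y1 y2 with h' | h'
    · right; right; constructor <;> linarith
    · left; right; constructor <;> linarith
  · have hl2 : yu < y2 := h.1 hl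
    rcases le_total y1 y2 with h' | h'
    · left; left; constructor <;> linarith
    · right; left; constructor <;> linarith

variable {α : Type*} {G : SimpleGraph α} {S : Finset (ℝ × ℝ)} {φ : α → ℝ × ℝ}
  {c : α → α → ℝ × ℝ}

lemma overlap_contra (hemb : IsLEmbedding G S φ c) {u w1 w2 : α}
    (h1 : G.Adj u w1) (h2 : G.Adj u w2) (hne : w1 ≠ w2)
    (hmem : c u w1 ∈ segment ℝ (φ u) (c u w2)) (hcn : c u w1 ≠ φ u) : False := by
  have hedges : s(u, w1) ≠ s(u, w2) := by
    intro h
    rcases Sym2.eq_iff.1 h with ⟨-, h2⟩ | ⟨-, h2⟩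
    · exact hne h2
    · exact h1.ne' h2
  obtain ⟨w, hw1, hw2, hw3⟩ := hemb.2.2.2.2 u w1 u w2 h1 h2 hedges (c u w1)
    ⟨Or.inl (right_mem_segment ℝ _ _), Or.inl hmem⟩
  rcases hw1 with rfl | rfl
  · exact hcn hw3
  · rcases hw2 with rfl | rfl
    · exact h1.ne rfl
    · exact hne rfl

open Classical in
lemma exists_four_dirs [Fintype α] (hemb : IsLEmbedding G S φ c) (hS : IsPointSet S)
    {u : α} (hdeg : (G.neighborSet u).ncard = 4) :
    (∃ s, G.Adj u s ∧ c u s = ((φ u).1, (φ s).2) ∧ (φ u).2 < (φ s).2) ∧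
    (∃ s, G.Adj u s ∧ c u s = ((φ u).1, (φ s).2) ∧ (φ s).2 < (φ u).2) ∧
    (∃ s, G.Adj u s ∧ c u s = ((φ s).1, (φ u).2) ∧ (φ u).1 < (φ s).1) ∧
    (∃ s, G.Adj u s ∧ c u s = ((φ s).1, (φ u).2) ∧ (φ s).1 < (φ u).1) := by
  classical
  have hcoord : ∀ w : α, w ≠ u → (φ w).1 ≠ (φ u).1 ∧ (φ w).2 ≠ (φ u).2 := fun w hw =>
    hS _ (hemb.2.1 w) _ (hemb.2.1 u) (fun h => hw (hemb.1 h))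
  classical
  let f : α → Bool × Bool := fun w =>
    if c u w = ((φ u).1, (φ w).2) then (true, decide ((φ u).2 < (φ w).2))
    else (false, decide ((φ u).1 < (φ w).1))
  have hinj : Set.InjOn f ↑(G.neighborSet u).toFinset := by
    intro w1 hw1 w2 hw2 hfeq
    by_contra hne
    simp only [Finset.coe_sort_coe, Finset.mem_coe, Set.mem_toFinset,
      SimpleGraph.mem_neighborSet] at hw1 hw2
    simp only [f] at hfeq
    by_cases hc1 : c u w1 = ((φ u).1, (φ w1).2) <;>
      by_cases hc2 : c u w2 = ((φ u).1, (φ w2).2)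
    · rw [if_pos hc1, if_pos hc2] at hfeq
      simp only [Prod.mk.injEq, true_and, decide_eq_decide] at hfeq
      have hray := ray_between (hcoord w1 hw1.ne').2 (hcoord w2 hw2.ne').2 hfeq
      rcases hray with h | h
      · exact overlap_contra hemb hw1 hw2 hne
          (by rw [hc1, hc2]; exact mem_seg_vert h)
          (by rw [hc1]; intro hh; have h' := congrArg Prod.snd hh; exact (hcoord w1 hw1.ne').2 h')
      · exact overlap_contra hemb hw2 hw1 (Ne.symm hne)
          (by rw [hc1, hc2]; exact mem_seg_vert h)
          (by rw [hc2]; intro hh; have h' := congrArg Prod.snd hh; exact (hcoord w2 hw2.ne').2 h')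
    · rw [if_pos hc1, if_neg hc2] at hfeq
      simp at hfeq
    · rw [if_neg hc1, if_pos hc2] at hfeq
      simp at hfeq
    · have hc1' : c u w1 = ((φ w1).1, (φ u).2) := (hemb.2.2.2.1 u w1 hw1).resolve_left hc1
      have hc2' : c u w2 = ((φ w2).1, (φ u).2) := (hemb.2.2.2.1 u w2 hw2).resolve_left hc2
      rw [if_neg hc1, if_neg hc2] at hfeq
      simp only [Prod.mk.injEq, true_and, decide_eq_decide] at hfeq
      have hray := ray_between (hcoord w1 hw1.ne').1 (hcoord w2 hw2.ne').1 hfeq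
      rcases hray with h | h
      · exact overlap_contra hemb hw1 hw2 hne
          (by rw [hc1', hc2']; exact mem_seg_horiz h)
          (by rw [hc1']; intro hh; have h' := congrArg Prod.fst hh; exact (hcoord w1 hw1.ne').1 h')
      · exact overlap_contra hemb hw2 hw1 (Ne.symm hne)
          (by rw [hc1', hc2']; exact mem_seg_horiz h)
          (by rw [hc2']; intro hh; have h' := congrArg Prod.fst hh; exact (hcoord w2 hw2.ne').1 h')
  -- pigeonhole
  have hcard : (G.neighborSet u).toFinset.card = 4 := by
    rw [← hdeg, Set.ncard_eq_toFinset_card']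
  have himgcard : ((G.neighborSet u).toFinset.image f).card = 4 := by
    rw [Finset.card_image_of_injOn hinj, hcard]
  have huniv : (G.neighborSet u).toFinset.image f = Finset.univ :=
    Finset.eq_univ_of_card _ (by simp [himgcard])
  have hget : ∀ d : Bool × Bool, ∃ w, G.Adj u w ∧ f w = d := by
    intro d
    have : d ∈ (G.neighborSet u).toFinset.image f := huniv ▸ Finset.mem_univ d
    obtain ⟨w, hw, hfw⟩ := Finset.mem_image.1 this
    rw [Set.mem_toFinset, SimpleGraph.mem_neighborSet] at hw
    exact ⟨w, hw, hfw⟩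
  have extract : ∀ (w : α) (b : Bool), G.Adj u w → f w = (true, b) →
      c u w = ((φ u).1, (φ w).2) ∧ (((φ u).2 < (φ w).2) ↔ b = true) := by
    intro w b hadj hfw
    by_cases hc : c u w = ((φ u).1, (φ w).2)
    · refine ⟨hc, ?_⟩
      simp only [f, if_pos hc, Prod.mk.injEq] at hfw
      rw [← hfw.2]
      simp
    · simp only [f, if_neg hc, Prod.mk.injEq] at hfw
      exact absurd hfw.1 (by simp)
  have extract' : ∀ (w : α) (b : Bool), G.Adj u w → f w = (false, b) →
      c u w = ((φ w).1, (φ u).2) ∧ (((φ u).1 < (φ w).1) ↔ b = true) := by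
    intro w b hadj hfw
    by_cases hc : c u w = ((φ u).1, (φ w).2)
    · simp only [f, if_pos hc, Prod.mk.injEq] at hfw
      exact absurd hfw.1 (by simp)
    · refine ⟨(hemb.2.2.2.1 u w hadj).resolve_left hc, ?_⟩
      simp only [f, if_neg hc, Prod.mk.injEq] at hfw
      rw [← hfw.2]
      simp
  refine ⟨?_, ?_, ?_, ?_⟩
  · obtain ⟨w, hadj, hfw⟩ := hget (true, true)
    obtain ⟨h1, h2⟩ := extract w true hadj hfw
    exact ⟨w, hadj, h1, h2.2 rfl⟩
  · obtain ⟨w, hadj, hfw⟩ := hget (true, false)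
    obtain ⟨h1, h2⟩ := extract w false hadj hfw
    refine ⟨w, hadj, h1, ?_⟩
    have hne2 := (hcoord w hadj.ne').2
    have h3 : (φ w).2 ≤ (φ u).2 := by
      rcases lt_or_ge (φ u).2 (φ w).2 with h' | h'
      · exact absurd (h2.1 h') (by simp)
      · exact h'
    exact lt_of_le_of_ne h3 hne2
  · obtain ⟨w, hadj, hfw⟩ := hget (false, true)
    obtain ⟨h1, h2⟩ := extract' w true hadj hfw
    exact ⟨w, hadj, h1, h2.2 rfl⟩
  · obtain ⟨w, hadj, hfw⟩ := hget (false, false)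
    obtain ⟨h1, h2⟩ := extract' w false hadj hfw
    refine ⟨w, hadj, h1, ?_⟩
    have hne2 := (hcoord w hadj.ne').1
    have h3 : (φ w).1 ≤ (φ u).1 := by
      rcases lt_or_ge (φ u).1 (φ w).1 with h' | h'
      · exact absurd (h2.1 h') (by simp)
      · exact h'
    exact lt_of_le_of_ne h3 hne2

end Aux

lemma staircase_pointset {k : ℕ} {a : Fin k → ℕ} {box : Fin k → Finset (ℝ × ℝ)}
    (hbox : IsStaircase a box) : IsPointSet (staircaseSet box) := by
  intro p hp q hq hpq
  simp only [staircaseSet, Finset.mem_biUnion, Finset.mem_univ, true_and] at hp hq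
  obtain ⟨i, hi⟩ := hp
  obtain ⟨j, hj⟩ := hq
  rcases lt_trichotomy i j with h | h | h
  · obtain ⟨h1, h2⟩ := hbox.2.2 i j h p hi q hj
    exact ⟨h1.ne, h2.ne'⟩
  · subst h
    obtain ⟨h1, h2⟩ := hbox.2.1 i p hi q hj hpq
    refine ⟨h1, ?_⟩
    rcases h1.lt_or_gt with h' | h'
    · exact (h2.1 h').ne
    · exact ((hbox.2.1 i q hj p hi (Ne.symm hpq)).2.1 h').ne'
  · obtain ⟨h1, h2⟩ := hbox.2.2 j i h q hj p hi
    exact ⟨h1.ne', h2.ne⟩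

/-- In an L-shaped embedding of a tree in a `(2,2,…,2)`-staircase (all boxes of size 2),
any two distinct degree-4 vertices are mapped into distinct boxes. -/
theorem degree_four_distinct_boxes {α : Type*} [Fintype α]
    (G : SimpleGraph α) (hG : G.IsTree)
    {k : ℕ} (box : Fin k → Finset (ℝ × ℝ))
    (hbox : IsStaircase (fun _ => 2) box)
    (φ : α → ℝ × ℝ) (c : α → α → ℝ × ℝ)
    (hemb : IsLEmbedding G (staircaseSet box) φ c) :
    ∀ u v : α, u ≠ v →
      (G.neighborSet u).ncard = 4 → (G.neighborSet v).ncard = 4 →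
      ∀ i : Fin k, φ u ∈ box i → φ v ∉ box i := by
  classical
  have hS : IsPointSet (staircaseSet box) := staircase_pointset hbox
  have hcoord : ∀ w1 w2 : α, w1 ≠ w2 → (φ w1).1 ≠ (φ w2).1 ∧ (φ w1).2 ≠ (φ w2).2 :=
    fun w1 w2 hw => hS _ (hemb.2.1 w1) _ (hemb.2.1 w2) (fun h => hw (hemb.1 h))
  have key : ∀ u v : α, u ≠ v →
      (G.neighborSet u).ncard = 4 → (G.neighborSet v).ncard = 4 →
      ∀ i : Fin k, φ u ∈ box i → φ v ∈ box i → (φ u).1 < (φ v).1 → False := by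
    intro u v huv hdu hdv i hu hv hlt
    have hne : φ u ≠ φ v := fun h => huv (hemb.1 h)
    have hyv : (φ u).2 < (φ v).2 := (hbox.2.1 i _ hu _ hv hne).2.1 hlt
    -- classification of the images of vertices relative to box i
    have hclass : ∀ w : α, φ w = φ u ∨ φ w = φ v ∨
        ((φ w).1 < (φ u).1 ∧ (φ v).2 < (φ w).2) ∨
        ((φ v).1 < (φ w).1 ∧ (φ w).2 < (φ u).2) := by
      intro w
      have hw := hemb.2.1 w
      simp only [staircaseSet, Finset.mem_biUnion, Finset.mem_univ, true_and] at hw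
      obtain ⟨j, hj⟩ := hw
      rcases lt_trichotomy j i with h | h | h
      · obtain ⟨h1, h2⟩ := hbox.2.2 j i h _ hj _ hu
        obtain ⟨h3, h4⟩ := hbox.2.2 j i h _ hj _ hv
        exact Or.inr (Or.inr (Or.inl ⟨h1, h4⟩))
      · subst h
        have hsub : ({φ u, φ v} : Finset (ℝ × ℝ)) ⊆ box j := by
          intro x hx
          simp only [Finset.mem_insert, Finset.mem_singleton] at hx
          rcases hx with rfl | rfl
          exacts [hu, hv]
        have hcard : (box j).card ≤ ({φ u, φ v} : Finset (ℝ × ℝ)).card := by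
          rw [hbox.1 j, Finset.card_insert_of_notMem (by simpa using hne),
            Finset.card_singleton]
        have hbeq := Finset.eq_of_subset_of_card_le hsub hcard
        rw [← hbeq] at hj
        simp only [Finset.mem_insert, Finset.mem_singleton] at hj
        rcases hj with h | h
        exacts [Or.inl h, Or.inr (Or.inl h)]
      · obtain ⟨h1, h2⟩ := hbox.2.2 i j h _ hv _ hj
        obtain ⟨h3, h4⟩ := hbox.2.2 i j h _ hu _ hj
        exact Or.inr (Or.inr (Or.inr ⟨h1, h4⟩))
    obtain ⟨⟨s, hsadj, hscor, hsy⟩, -, ⟨q, hqadj, hqcor, hqx⟩, -⟩ :=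
      exists_four_dirs hemb hS hdu
    obtain ⟨-, ⟨t, htadj, htcor, hty⟩, -, ⟨r, hradj, hrcor, hrx⟩⟩ :=
      exists_four_dirs hemb hS hdv
    -- bounds on the four special neighbours
    have hsge : (φ v).2 ≤ (φ s).2 := by
      rcases hclass s with h | h | h | h
      · exact absurd (congrArg Prod.snd h) hsy.ne'
      · exact (congrArg Prod.snd h).ge
      · exact h.2.le
      · linarith [h.2]
    have hqge : (φ v).1 ≤ (φ q).1 := by
      rcases hclass q with h | h | h | h
      · exact absurd (congrArg Prod.fst h) hqx.ne'
      · exact (congrArg Prod.fst h).ge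
      · linarith [h.1]
      · exact h.1.le
    have hrle : (φ r).1 ≤ (φ u).1 := by
      rcases hclass r with h | h | h | h
      · exact (congrArg Prod.fst h).le
      · exact absurd (congrArg Prod.fst h) hrx.ne
      · linarith [h.1]
      · linarith [h.1]
    have htle : (φ t).2 ≤ (φ u).2 := by
      rcases hclass t with h | h | h | h
      · exact (congrArg Prod.snd h).le
      · exact absurd (congrArg Prod.snd h) hty.ne
      · linarith [h.2]
      · exact h.2.le
    -- the first candidate crossing point ((φ u).1, (φ v).2)
    have hm1u : (((φ u).1, (φ v).2) : ℝ × ℝ) ∈ LDraw φ c u s := by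
      left
      rw [hscor]
      exact mem_seg_vert (Set.mem_uIcc.2 (Or.inl ⟨hyv.le, hsge⟩))
    have hm1v : (((φ u).1, (φ v).2) : ℝ × ℝ) ∈ LDraw φ c v r := by
      left
      rw [hrcor]
      exact mem_seg_horiz (Set.mem_uIcc.2 (Or.inr ⟨hrle, hlt.le⟩))
    by_cases hA : s(u, s) = s(v, r)
    · -- then the edge u–v has corner ((φ u).1, (φ v).2); use the second candidate point
      have hsv : s = v := by
        rcases Sym2.eq_iff.1 hA with ⟨h1, h2⟩ | ⟨h1, h2⟩
        · exact absurd h1 huv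
        · exact h2
      have hcuv : c u v = ((φ u).1, (φ v).2) := by
        rw [hsv] at hscor; exact hscor
      by_cases hB : s(u, q) = s(v, t)
      · have hqv : q = v := by
          rcases Sym2.eq_iff.1 hB with ⟨h1, h2⟩ | ⟨h1, h2⟩
          · exact absurd h1 huv
          · exact h2
        rw [hqv] at hqcor
        have hcontr := hcuv.symm.trans hqcor
        have h1 := congrArg Prod.fst hcontr
        exact (hcoord u v huv).1 h1
      · have hm2u : (((φ v).1, (φ u).2) : ℝ × ℝ) ∈ LDraw φ c u q := by
          left
          rw [hqcor]
          exact mem_seg_horiz (Set.mem_uIcc.2 (Or.inl ⟨hlt.le, hqge⟩))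
        have hm2v : (((φ v).1, (φ u).2) : ℝ × ℝ) ∈ LDraw φ c v t := by
          left
          rw [htcor]
          exact mem_seg_vert (Set.mem_uIcc.2 (Or.inr ⟨htle, hyv.le⟩))
        obtain ⟨w, hw1, hw2, hw3⟩ :=
          hemb.2.2.2.2 u q v t hqadj htadj hB _ ⟨hm2u, hm2v⟩
        rcases hw1 with rfl | rfl
        · have h1 := congrArg Prod.fst hw3
          exact hlt.ne h1.symm
        · rcases hw2 with rfl | rfl
          · have h1 := congrArg Prod.snd hw3
            exact hyv.ne h1
          · have h1 := congrArg Prod.snd hw3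
            exact (hcoord w u hqadj.ne').2 h1.symm
    · obtain ⟨w, hw1, hw2, hw3⟩ :=
        hemb.2.2.2.2 u s v r hsadj hradj hA _ ⟨hm1u, hm1v⟩
      rcases hw1 with rfl | rfl
      · have h1 := congrArg Prod.snd hw3
        exact hyv.ne' h1
      · rcases hw2 with rfl | rfl
        · have h1 := congrArg Prod.fst hw3
          exact hlt.ne h1
        · have h1 := congrArg Prod.fst hw3
          exact (hcoord w u hsadj.ne').1 h1.symm
  intro u v huv hdu hdv i hu hv
  have hne : φ u ≠ φ v := fun h => huv (hemb.1 h)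
  rcases (hbox.2.1 i _ hu _ hv hne).1.lt_or_gt with h | h
  · exact key u v huv hdu hdv i hu hv h
  · exact key v u huv.symm hdv hdu i hv hu h
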